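/- The optimal alignment score L_{kn} of sequences of length kn equals the maximum over partitions: L_{kn} = max_{(ν,τ) ∈ ℬ_{k,n}} Σ_{j=1}^r L(X_{ν_j},...,X_{ν_{j+1}-1}; Y_{τ_j},...,Y_{τ_{j+1}-1}). -/

import Mathlib

open MeasureTheory ProbabilityTheory Real Filter

/-- Optimal alignment score of two sequences of the same length `m`,
with pairwise score `S` and gap price `δ` (a gap is a pair of indels). -/
noncomputable def alignScore {𝔸 : Type*} (S : 𝔸 → 𝔸 → ℝ) (δ : ℝ) {m : ℕ}
    (x y : Fin m → 𝔸) : ℝ :=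
  sSup {s : ℝ | ∃ (k : ℕ) (al : Fin k → Fin m) (mu : Fin k → Fin m),
    StrictMono al ∧ StrictMono mu ∧
    s = (∑ i, S (x (al i)) (y (mu i))) + δ * ((m : ℝ) - (k : ℝ))}

/-- Optimal alignment score for sequences of possibly different lengths `p`, `q`;
the gap count is `((p-k)+(q-k))/2`. -/
noncomputable def alignScore2 {𝔸 : Type*} (S : 𝔸 → 𝔸 → ℝ) (δ : ℝ) {p q : ℕ}
    (x : Fin p → 𝔸) (y : Fin q → 𝔸) : ℝ :=
  sSup {s : ℝ | ∃ (k : ℕ) (al : Fin k → Fin p) (mu : Fin k → Fin q),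
    StrictMono al ∧ StrictMono mu ∧
    s = (∑ i, S (x (al i)) (y (mu i))) +
      δ * ((((p : ℝ) - (k : ℝ)) + ((q : ℝ) - (k : ℝ))) / 2)}
/-- The set `ℬ^r_{k,n}` of `r`-partitions. -/
def PartSet (r k n : ℕ) : Set ((Fin (r + 1) → ℕ) × (Fin (r + 1) → ℕ)) :=
  {p | Monotone p.1 ∧ Monotone p.2 ∧ p.1 0 = 1 ∧ p.2 0 = 1 ∧
    p.1 (Fin.last r) = k * n + 1 ∧ p.2 (Fin.last r) = k * n + 1 ∧
    ∀ j : Fin r,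
      ((j : ℕ) + 1 < r →
        (p.1 j.succ - p.1 j.castSucc) + (p.2 j.succ - p.2 j.castSucc)
          ∈ ({2 * n - 1, 2 * n} : Set ℕ)) ∧
      ((j : ℕ) + 1 = r →
        (p.1 j.succ - p.1 j.castSucc) + (p.2 j.succ - p.2 j.castSucc) ≤ 2 * n)}

/-!
Concatenating optimal alignments of consecutive blocks gives an alignment of the whole
sequences, so no partition sum exceeds the optimal score. Conversely, an alignment of two
sequences of length `m` is a monotone lattice path from `(0, 0)` to `(m, m)` with steps `(1, 0)`,
`(0, 1)`, `(1, 1)`. Every point `(a, b)` of the path cuts both sequences without separating an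
aligned pair, and its level `a + b` grows by `1` or `2` per step. Cutting the path greedily, each
time at the last point whose level is at most `2n` above the previous cut, gives blocks of size
`2n - 1` or `2n` (the last one at most `2n`), hence a partition in `ℬ_{k,n}`; restricted to these
blocks the alignment splits into block alignments whose scores add up to its score.
-/

theorem Fin.strictMono_append {α : Type*} [Preorder α] {k₁ k₂ : ℕ} {u : Fin k₁ → α}
    {v : Fin k₂ → α} (hu : StrictMono u) (hv : StrictMono v) (huv : ∀ i j, u i < v j) :
    StrictMono (Fin.append u v) := by
  intro i j hij
  induction i using Fin.addCases <;> induction j using Fin.addCases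
  all_goals
    simp only [Fin.append_left, Fin.append_right]
    rw [Fin.lt_def] at hij
    simp only [Fin.val_castAdd, Fin.val_natAdd] at hij
  · exact hu hij
  · exact huv _ _
  · omega
  · exact hv (by rw [Fin.lt_def]; omega)

namespace Alignment

variable {𝔸 : Type*} (S : 𝔸 → 𝔸 → ℝ) (δ : ℝ)

def scores {p q : ℕ} (x : Fin p → 𝔸) (y : Fin q → 𝔸) : Set ℝ :=
  {s : ℝ | ∃ (k : ℕ) (al : Fin k → Fin p) (mu : Fin k → Fin q),
    StrictMono al ∧ StrictMono mu ∧
    s = (∑ i, S (x (al i)) (y (mu i))) +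
      δ * ((((p : ℝ) - (k : ℝ)) + ((q : ℝ) - (k : ℝ))) / 2)}

section Scores

variable {p q : ℕ} (x : Fin p → 𝔸) (y : Fin q → 𝔸)

theorem alignScore2_eq_sSup_scores : alignScore2 S δ x y = sSup (scores S δ x y) := rfl

theorem scores_nonempty : (scores S δ x y).Nonempty :=
  ⟨_, 0, Fin.elim0, Fin.elim0, fun a => a.elim0, fun a => a.elim0, rfl⟩

theorem scores_finite : (scores S δ x y).Finite := by
  refine (Set.finite_iUnion fun k : Fin (p + 1) => Set.finite_range
    fun f : (Fin k → Fin p) × (Fin k → Fin q) => (∑ i, S (x (f.1 i)) (y (f.2 i))) +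
      δ * ((((p : ℝ) - (k : ℕ)) + ((q : ℝ) - (k : ℕ))) / 2)).subset ?_
  rintro s ⟨k, al, mu, hal, _, rfl⟩
  have hk : k < p + 1 :=
    Nat.lt_succ_of_le (by simpa using Fintype.card_le_of_injective al hal.injective)
  exact Set.mem_iUnion.2 ⟨⟨k, hk⟩, (al, mu), rfl⟩

theorem alignScore2_mem_scores : alignScore2 S δ x y ∈ scores S δ x y :=
  (scores_nonempty S δ x y).csSup_mem (scores_finite S δ x y)

theorem le_alignScore2 {k : ℕ} {al : Fin k → Fin p} {mu : Fin k → Fin q}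
    (hal : StrictMono al) (hmu : StrictMono mu) :
    (∑ i, S (x (al i)) (y (mu i))) + δ * ((((p : ℝ) - k) + ((q : ℝ) - k)) / 2) ≤
      alignScore2 S δ x y :=
  le_csSup (scores_finite S δ x y).bddAbove ⟨k, al, mu, hal, hmu, rfl⟩

end Scores

theorem alignScore_eq_alignScore2 {m : ℕ} (x y : Fin m → 𝔸) :
    alignScore S δ x y = alignScore2 S δ x y := by
  unfold alignScore alignScore2
  simp only [show ∀ a b : ℝ, ((a - b) + (a - b)) / 2 = a - b from fun _ _ => by ring]

variable (x y : ℕ → 𝔸)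

noncomputable def blockScore (s t p q : ℕ) : ℝ :=
  alignScore2 S δ (fun i : Fin p => x (s + i)) (fun i : Fin q => y (t + i))

theorem blockScore_add_le (s t p₁ q₁ p₂ q₂ : ℕ) :
    blockScore S δ x y s t p₁ q₁ + blockScore S δ x y (s + p₁) (t + q₁) p₂ q₂ ≤
      blockScore S δ x y s t (p₁ + p₂) (q₁ + q₂) := by
  obtain ⟨k₁, al₁, mu₁, hal₁, hmu₁, h₁⟩ := alignScore2_mem_scores S δ
    (fun i : Fin p₁ => x (s + i)) (fun i : Fin q₁ => y (t + i))
  obtain ⟨k₂, al₂, mu₂, hal₂, hmu₂, h₂⟩ := alignScore2_mem_scores S δ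
    (fun i : Fin p₂ => x (s + p₁ + i)) (fun i : Fin q₂ => y (t + q₁ + i))
  have hcat := le_alignScore2 S δ (fun i : Fin (p₁ + p₂) => x (s + i))
    (fun i : Fin (q₁ + q₂) => y (t + i))
    (Fin.strictMono_append (Fin.strictMono_castAdd p₂ |>.comp hal₁)
      (Fin.strictMono_natAdd p₁ |>.comp hal₂) fun i j => by simp [Fin.lt_def]; omega)
    (Fin.strictMono_append (Fin.strictMono_castAdd q₂ |>.comp hmu₁)
      (Fin.strictMono_natAdd q₁ |>.comp hmu₂) fun i j => by simp [Fin.lt_def]; omega)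
  refine le_of_eq_of_le ?_ hcat
  rw [blockScore, blockScore, h₁, h₂, Fin.sum_univ_add]
  simp only [Fin.append_left, Fin.append_right, Function.comp_apply, Fin.val_castAdd,
    Fin.val_natAdd, add_assoc]
  push_cast
  ring

theorem blockScore_add_le_of_le {s₁ t₁ s₂ t₂ s₃ t₃ : ℕ} (hs₁₂ : s₁ ≤ s₂) (hs₂₃ : s₂ ≤ s₃)
    (ht₁₂ : t₁ ≤ t₂) (ht₂₃ : t₂ ≤ t₃) :
    blockScore S δ x y s₁ t₁ (s₂ - s₁) (t₂ - t₁) + blockScore S δ x y s₂ t₂ (s₃ - s₂) (t₃ - t₂) ≤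
      blockScore S δ x y s₁ t₁ (s₃ - s₁) (t₃ - t₁) := by
  obtain ⟨p₁, rfl⟩ := Nat.exists_eq_add_of_le hs₁₂
  obtain ⟨p₂, rfl⟩ := Nat.exists_eq_add_of_le hs₂₃
  obtain ⟨q₁, rfl⟩ := Nat.exists_eq_add_of_le ht₁₂
  obtain ⟨q₂, rfl⟩ := Nat.exists_eq_add_of_le ht₂₃
  simpa only [Nat.add_sub_add_left, Nat.add_sub_cancel_left, add_assoc] using
    blockScore_add_le S δ x y s₁ t₁ p₁ q₁ p₂ q₂

theorem blockScore_zero_zero_nonneg (s t : ℕ) : 0 ≤ blockScore S δ x y s t 0 0 := by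
  simpa [blockScore] using le_alignScore2 S δ (fun i : Fin 0 => x (s + i))
    (fun i : Fin 0 => y (t + i)) (al := Fin.elim0) (mu := Fin.elim0)
    (fun a => a.elim0) (fun a => a.elim0)

theorem sum_blockScore_le {r : ℕ} (ν τ : Fin (r + 1) → ℕ) (hν : Monotone ν) (hτ : Monotone τ) :
    ∑ j : Fin r, blockScore S δ x y (ν j.castSucc) (τ j.castSucc)
        (ν j.succ - ν j.castSucc) (τ j.succ - τ j.castSucc) ≤
      blockScore S δ x y (ν 0) (τ 0) (ν (Fin.last r) - ν 0) (τ (Fin.last r) - τ 0) := by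
  induction r with
  | zero => simpa using blockScore_zero_zero_nonneg S δ x y (ν 0) (τ 0)
  | succ r ih =>
    have hprefix := ih (ν ∘ Fin.castSucc) (τ ∘ Fin.castSucc)
      (hν.comp Fin.strictMono_castSucc.monotone) (hτ.comp Fin.strictMono_castSucc.monotone)
    simp only [Function.comp_apply, Fin.castSucc_zero, ← Fin.succ_castSucc] at hprefix
    rw [Fin.sum_univ_castSucc, ← Fin.succ_last]
    exact (add_le_add_left hprefix _).trans <| blockScore_add_le_of_le S δ x y
      (hν (Fin.zero_le _)) (hν (Fin.castSucc_le_succ _))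
      (hτ (Fin.zero_le _)) (hτ (Fin.castSucc_le_succ _))

theorem sum_blockScore_le_of_mem_partSet {r k n : ℕ}
    {p : (Fin (r + 1) → ℕ) × (Fin (r + 1) → ℕ)} (hp : p ∈ PartSet r k n) :
    ∑ j : Fin r, blockScore S δ x y (p.1 j.castSucc) (p.2 j.castSucc)
        (p.1 j.succ - p.1 j.castSucc) (p.2 j.succ - p.2 j.castSucc) ≤
      blockScore S δ x y 1 1 (k * n) (k * n) := by
  obtain ⟨hν, hτ, hν0, hτ0, hνr, hτr, -⟩ := hp
  simpa [hν0, hτ0, hνr, hτr] using sum_blockScore_le S δ x y p.1 p.2 hν hτ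

/-- A cut after the first `a` letters of `x` and the first `b` letters of `y`, with `c` aligned
pairs before it. An alignment is encoded by the strictly increasing positions `α i`, `β i` of
its `i`-th aligned pair. -/
structure Cut where
  a : ℕ
  b : ℕ
  c : ℕ

def Cut.IsCompatible (α β : ℕ → ℕ) (q : Cut) : Prop :=
  (∀ i, α i < q.a ↔ i < q.c) ∧ (∀ i, β i < q.b ↔ i < q.c)

noncomputable def prefixScore (s t : ℕ) (α β : ℕ → ℕ) (q : Cut) : ℝ :=
  (∑ i ∈ Finset.range q.c, S (x (s + α i)) (y (t + β i))) +
    δ * ((((q.a : ℝ) - q.c) + ((q.b : ℝ) - q.c)) / 2)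

/-- One step along the lattice path of the alignment: gaps in `x` first, then gaps in `y`,
then the next aligned pair. -/
def pathStep (α β : ℕ → ℕ) (m : ℕ) (q : Cut) : Cut :=
  if q.a < m ∧ q.a < α q.c then ⟨q.a + 1, q.b, q.c⟩
  else if q.b < m ∧ q.b < β q.c then ⟨q.a, q.b + 1, q.c⟩
  else if q.a < m ∧ q.b < m then ⟨q.a + 1, q.b + 1, q.c + 1⟩
  else q

def path (α β : ℕ → ℕ) (m t : ℕ) : Cut := (pathStep α β m)^[t] ⟨0, 0, 0⟩

section Cuts

variable {α β : ℕ → ℕ} {m K : ℕ} {q q' : Cut}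

theorem Cut.IsCompatible.c_le (h : q.IsCompatible α β) (h' : q'.IsCompatible α β)
    (ha : q.a ≤ q'.a) : q.c ≤ q'.c := by
  by_contra! hc
  exact lt_irrefl q'.c ((h'.1 q'.c).1 (((h.1 q'.c).2 hc).trans_le ha))

theorem Cut.IsCompatible.c_eq_of_a_eq (hαm : ∀ i, α i < m ↔ i < K)
    (h : q.IsCompatible α β) (ha : q.a = m) : q.c = K :=
  eq_of_forall_lt_iff fun i => by rw [← h.1 i, ha, hαm]

theorem Cut.IsCompatible.c_eq_of_b_eq (hβm : ∀ i, β i < m ↔ i < K)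
    (h : q.IsCompatible α β) (hb : q.b = m) : q.c = K :=
  eq_of_forall_lt_iff fun i => by rw [← h.2 i, hb, hβm]

theorem prefixScore_le_add_blockScore (hα : StrictMono α) (hβ : StrictMono β) (s t : ℕ)
    (h : q.IsCompatible α β) (h' : q'.IsCompatible α β) (ha : q.a ≤ q'.a) (hb : q.b ≤ q'.b) :
    prefixScore S δ x y s t α β q' ≤ prefixScore S δ x y s t α β q +
      blockScore S δ x y (q.a + s) (q.b + t) (q'.a - q.a) (q'.b - q.b) := by
  have hc := h.c_le h' ha
  obtain ⟨a, b, c⟩ := q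
  obtain ⟨a', b', c'⟩ := q'
  simp only [Cut.IsCompatible] at h h' hc ha hb ⊢
  have hlo : ∀ j : Fin (c' - c), a ≤ α (c + j) ∧ b ≤ β (c + j) := fun j =>
    ⟨not_lt.1 fun hlt => by have := (h.1 _).1 hlt; omega,
      not_lt.1 fun hlt => by have := (h.2 _).1 hlt; omega⟩
  have hhi : ∀ j : Fin (c' - c), α (c + j) < a' ∧ β (c + j) < b' := fun j =>
    ⟨(h'.1 _).2 (by omega), (h'.2 _).2 (by omega)⟩
  have hblock := le_alignScore2 S δ (fun i : Fin (a' - a) => x (a + s + i))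
    (fun i : Fin (b' - b) => y (b + t + i))
    (al := fun j => ⟨α (c + j) - a, by have := hlo j; have := hhi j; omega⟩)
    (mu := fun j => ⟨β (c + j) - b, by have := hlo j; have := hhi j; omega⟩)
    (fun i j (hij : (i : ℕ) < j) => Fin.mk_lt_mk.2 <| by
      have := hα (Nat.add_lt_add_left hij c); have := hlo i; omega)
    (fun i j (hij : (i : ℕ) < j) => Fin.mk_lt_mk.2 <| by
      have := hβ (Nat.add_lt_add_left hij c); have := hlo i; omega)
  have hshift : ∀ j : Fin (c' - c),
      S (x (a + s + (α (c + j) - a))) (y (b + t + (β (c + j) - b))) =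
        S (x (s + α (c + j))) (y (t + β (c + j))) := fun j => by
    have := hlo j
    rw [show a + s + (α (c + j) - a) = s + α (c + j) by omega,
      show b + t + (β (c + j) - b) = t + β (c + j) by omega]
  simp only [hshift,
    Fin.sum_univ_eq_sum_range (fun j => S (x (s + α (c + j))) (y (t + β (c + j))))] at hblock
  unfold prefixScore blockScore
  rw [← Finset.sum_range_add_sum_Ico _ hc, Finset.sum_Ico_eq_sum_range]
  push_cast [Nat.cast_sub ha, Nat.cast_sub hb, Nat.cast_sub hc] at hblock ⊢
  linarith

theorem prefixScore_sub_le_sum_blockScore (hα : StrictMono α) (hβ : StrictMono β) (s t : ℕ)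
    (q : ℕ → Cut) (hq : ∀ j, (q j).IsCompatible α β)
    (ha : Monotone fun j => (q j).a) (hb : Monotone fun j => (q j).b) (r : ℕ) :
    prefixScore S δ x y s t α β (q r) - prefixScore S δ x y s t α β (q 0) ≤
      ∑ j ∈ Finset.range r, blockScore S δ x y ((q j).a + s) ((q j).b + t)
        ((q (j + 1)).a - (q j).a) ((q (j + 1)).b - (q j).b) := by
  rw [← Finset.sum_range_sub fun j => prefixScore S δ x y s t α β (q j)]
  exact Finset.sum_le_sum fun j _ => sub_le_iff_le_add'.2 <|
    prefixScore_le_add_blockScore S δ x y hα hβ s t (hq j) (hq (j + 1))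
      (ha j.le_succ) (hb j.le_succ)

theorem Cut.IsCompatible.pathStep (hα : StrictMono α) (hβ : StrictMono β)
    (h : q.IsCompatible α β) : (pathStep α β m q).IsCompatible α β := by
  obtain ⟨hx, hy⟩ := h
  unfold Alignment.pathStep
  split_ifs with hgx hgy hmatch
  · refine ⟨fun i => ⟨fun hi => hα.lt_iff_lt.1 ?_, fun hi => ?_⟩, hy⟩
    · exact lt_of_le_of_lt (Nat.lt_succ_iff.1 hi) hgx.2
    · exact ((hx i).2 hi).trans (Nat.lt_succ_self _)
  · refine ⟨hx, fun i => ⟨fun hi => hβ.lt_iff_lt.1 ?_, fun hi => ?_⟩⟩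
    · exact lt_of_le_of_lt (Nat.lt_succ_iff.1 hi) hgy.2
    · exact ((hy i).2 hi).trans (Nat.lt_succ_self _)
  · have hac : α q.c = q.a :=
      le_antisymm (by omega) (not_lt.1 fun h => by simpa using (hx _).1 h)
    have hbc : β q.c = q.b :=
      le_antisymm (by omega) (not_lt.1 fun h => by simpa using (hy _).1 h)
    refine ⟨fun i => ?_, fun i => ?_⟩
    · rw [Nat.lt_succ_iff, ← hac, hα.le_iff_le, Nat.lt_succ_iff]
    · rw [Nat.lt_succ_iff, ← hbc, hβ.le_iff_le, Nat.lt_succ_iff]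
  · exact ⟨hx, hy⟩

theorem pathStep_bounds (ha : q.a ≤ m) (hb : q.b ≤ m) :
    q.a ≤ (pathStep α β m q).a ∧ q.b ≤ (pathStep α β m q).b ∧
      (pathStep α β m q).a ≤ m ∧ (pathStep α β m q).b ≤ m ∧
      (pathStep α β m q).a + (pathStep α β m q).b ≤ q.a + q.b + 2 := by
  unfold pathStep
  split_ifs <;> (try dsimp only) <;> omega

theorem lt_level_pathStep (hαm : ∀ i, α i < m ↔ i < K) (hβm : ∀ i, β i < m ↔ i < K)
    (h : q.IsCompatible α β) (ha : q.a ≤ m) (hb : q.b ≤ m) (hlt : q.a + q.b < 2 * m) :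
    q.a + q.b < (pathStep α β m q).a + (pathStep α β m q).b := by
  unfold pathStep
  split_ifs with hgx hgy hmatch
  · dsimp only; omega
  · dsimp only; omega
  · dsimp only; omega
  · exfalso
    rcases Nat.lt_or_ge q.a m with ha' | ha'
    · have hK : m ≤ α K := not_lt.1 ((hαm K).not.2 (lt_irrefl K))
      exact hgx ⟨ha', h.c_eq_of_b_eq hβm (by omega) ▸ by omega⟩
    · have hK : m ≤ β K := not_lt.1 ((hβm K).not.2 (lt_irrefl K))
      exact hgy ⟨by omega, h.c_eq_of_a_eq hαm (by omega) ▸ by omega⟩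

theorem path_succ (t : ℕ) : path α β m (t + 1) = pathStep α β m (path α β m t) :=
  Function.iterate_succ_apply' _ _ _

theorem path_isCompatible (hα : StrictMono α) (hβ : StrictMono β) (t : ℕ) :
    (path α β m t).IsCompatible α β := by
  induction t with
  | zero => exact ⟨fun i => by simp [path], fun i => by simp [path]⟩
  | succ t ih => rw [path_succ]; exact ih.pathStep hα hβ

theorem path_le (t : ℕ) : (path α β m t).a ≤ m ∧ (path α β m t).b ≤ m := by
  induction t with
  | zero => simp [path]
  | succ t ih =>
    rw [path_succ]
    obtain ⟨-, -, ha, hb, -⟩ := pathStep_bounds (α := α) (β := β) ih.1 ih.2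
    exact ⟨ha, hb⟩

theorem path_succ_bounds (t : ℕ) :
    (path α β m t).a ≤ (path α β m (t + 1)).a ∧ (path α β m t).b ≤ (path α β m (t + 1)).b ∧
      (path α β m (t + 1)).a + (path α β m (t + 1)).b ≤
        (path α β m t).a + (path α β m t).b + 2 := by
  rw [path_succ]
  obtain ⟨ha, hb, -, -, hab⟩ := pathStep_bounds (α := α) (β := β) (path_le t).1 (path_le t).2
  exact ⟨ha, hb, hab⟩

theorem min_le_level_path (hα : StrictMono α) (hβ : StrictMono β)
    (hαm : ∀ i, α i < m ↔ i < K) (hβm : ∀ i, β i < m ↔ i < K) (t : ℕ) :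
    min t (2 * m) ≤ (path α β m t).a + (path α β m t).b := by
  induction t with
  | zero => simp
  | succ t ih =>
    have hmono := path_succ_bounds (α := α) (β := β) (m := m) t
    rcases Nat.lt_or_ge ((path α β m t).a + (path α β m t).b) (2 * m) with hlt | hge
    · have := path_succ t ▸ lt_level_pathStep hαm hβm (path_isCompatible hα hβ t)
        (path_le t).1 (path_le t).2 hlt
      omega
    · omega

end Cuts

noncomputable def greedyNext (σ : ℕ → ℕ) (n T u : ℕ) : ℕ :=
  Nat.findGreatest (fun t => σ t ≤ σ u + 2 * n) T

section Greedy

variable {σ : ℕ → ℕ} {n T u : ℕ}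

theorem greedyNext_le : greedyNext σ n T u ≤ T := Nat.findGreatest_le T

theorem level_greedyNext_le (hu : u ≤ T) : σ (greedyNext σ n T u) ≤ σ u + 2 * n :=
  Nat.findGreatest_spec (P := fun t => σ t ≤ σ u + 2 * n) hu (Nat.le_add_right _ _)

theorem greedyNext_self : greedyNext σ n T T = T :=
  le_antisymm greedyNext_le
    (Nat.le_findGreatest (P := fun t => σ t ≤ σ T + 2 * n) le_rfl (Nat.le_add_right _ _))

theorem lt_greedyNext (hn : 1 ≤ n) (hstep : ∀ t, σ (t + 1) ≤ σ t + 2) (hu : u < T) :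
    u < greedyNext σ n T u :=
  Nat.le_findGreatest (P := fun t => σ t ≤ σ u + 2 * n) (m := u + 1) hu
    (by have := hstep u; omega)

theorem le_level_greedyNext (hn : 1 ≤ n) (hstep : ∀ t, σ (t + 1) ≤ σ t + 2)
    (hu : greedyNext σ n T u < T) : σ u + (2 * n - 1) ≤ σ (greedyNext σ n T u) := by
  have hmax : σ u + 2 * n < σ (greedyNext σ n T u + 1) :=
    not_le.1 <| Nat.findGreatest_is_greatest (P := fun t => σ t ≤ σ u + 2 * n)
      (Nat.lt_add_one (greedyNext σ n T u)) hu
  have := hstep (greedyNext σ n T u)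
  omega

theorem exists_greedy_blocks {L : ℕ} (hn : 1 ≤ n) (hstep : ∀ t, σ (t + 1) ≤ σ t + 2)
    (hle : ∀ t, σ t ≤ L) (hreach : ∃ T, σ T = L) :
    ∃ (r : ℕ) (τ : ℕ → ℕ), Monotone τ ∧ τ 0 = 0 ∧ σ (τ r) = L ∧
      ∀ j < r, σ (τ j) < L ∧ σ (τ (j + 1)) ≤ σ (τ j) + 2 * n ∧
        (j + 1 < r → σ (τ j) + (2 * n - 1) ≤ σ (τ (j + 1))) := by
  classical
  set T := Nat.find hreach
  set τ : ℕ → ℕ := fun j => (greedyNext σ n T)^[j] 0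
  have hτ_succ (j : ℕ) : τ (j + 1) = greedyNext σ n T (τ j) := Function.iterate_succ_apply' _ _ _
  have hτ_le (j : ℕ) : τ j ≤ T := by
    cases j with
    | zero => exact Nat.zero_le T
    | succ j => rw [hτ_succ]; exact greedyNext_le
  have hτ_le_succ (j : ℕ) : τ j ≤ τ (j + 1) := by
    rw [hτ_succ]
    rcases (hτ_le j).lt_or_eq with h | h
    · exact (lt_greedyNext hn hstep h).le
    · rw [h, greedyNext_self]
  have hτ_reach : ∃ j, τ j = T := by
    suffices ∀ j, min j T ≤ τ j from ⟨T, le_antisymm (hτ_le T) (by simpa using this T)⟩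
    intro j
    induction j with
    | zero => simp
    | succ j ih =>
      rcases (hτ_le j).lt_or_eq with h | h
      · have := lt_greedyNext hn hstep h; rw [hτ_succ]; omega
      · have := hτ_le_succ j; omega
  have hτ_lt {j : ℕ} (hj : j < Nat.find hτ_reach) : τ j < T :=
    lt_of_le_of_ne (hτ_le j) (Nat.find_min hτ_reach hj)
  refine ⟨Nat.find hτ_reach, τ, monotone_nat_of_le_succ hτ_le_succ, rfl,
    by rw [Nat.find_spec hτ_reach, Nat.find_spec hreach], fun j hj => ⟨?_, ?_, fun hj₁ => ?_⟩⟩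
  · exact lt_of_le_of_ne (hle _) (Nat.find_min hreach (hτ_lt hj))
  · rw [hτ_succ]; exact level_greedyNext_le (hτ_le j)
  · rw [hτ_succ]; exact le_level_greedyNext hn hstep (hτ_succ j ▸ hτ_lt hj₁)

end Greedy

theorem block_count_bounds {v : ℕ → ℕ} {L n r : ℕ} (hn : 1 ≤ n) (h0 : v 0 = 0)
    (hr : v r = L) (hblocks : ∀ j < r, v j < L ∧ v (j + 1) ≤ v j + 2 * n ∧
      (j + 1 < r → v j + (2 * n - 1) ≤ v (j + 1))) :
    L ≤ 2 * n * r ∧ r ≤ ⌈(L : ℚ) / (2 * n - 1)⌉₊ := by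
  have hupper : ∀ j ≤ r, v j ≤ 2 * n * j := by
    intro j hj
    induction j with
    | zero => omega
    | succ j ih =>
      have := (hblocks j (by omega)).2.1; have := ih (by omega); rw [mul_add]; omega
  have hlower : ∀ j < r, (2 * n - 1) * j ≤ v j := by
    intro j hj
    induction j with
    | zero => omega
    | succ j ih =>
      have := (hblocks j (by omega)).2.2 hj; have := ih (by omega); rw [mul_add]; omega
  refine ⟨hr ▸ hupper r le_rfl, ?_⟩
  cases r with
  | zero => exact Nat.zero_le _
  | succ r =>
    have hpos : (0 : ℚ) < 2 * n - 1 := by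
      have : (1 : ℚ) ≤ n := by exact_mod_cast hn
      linarith
    have hlt : (2 * n - 1) * r < L := (hlower r (by omega)).trans_lt (hblocks r (by omega)).1
    refine Nat.add_one_le_ceil_iff.2 ((lt_div_iff₀ hpos).2 ?_)
    have hcast : ((2 * n - 1 : ℕ) : ℚ) = 2 * n - 1 := by
      push_cast [Nat.cast_sub (by omega : 1 ≤ 2 * n)]
      ring
    rw [← hcast, mul_comm]
    exact_mod_cast hlt

theorem exists_compatible_cuts {α β : ℕ → ℕ} {m K n : ℕ} (hα : StrictMono α)
    (hβ : StrictMono β) (hαm : ∀ i, α i < m ↔ i < K) (hβm : ∀ i, β i < m ↔ i < K)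
    (hn : 1 ≤ n) :
    ∃ (r : ℕ) (q : ℕ → Cut), (∀ j, (q j).IsCompatible α β) ∧
      Monotone (fun j => (q j).a) ∧ Monotone (fun j => (q j).b) ∧
      (q 0).a = 0 ∧ (q 0).b = 0 ∧ (q r).a = m ∧ (q r).b = m ∧
      2 * m ≤ 2 * n * r ∧ r ≤ ⌈((2 * m : ℕ) : ℚ) / (2 * n - 1)⌉₊ ∧
      ∀ j < r, (q (j + 1)).a + (q (j + 1)).b ≤ (q j).a + (q j).b + 2 * n ∧
        (j + 1 < r → (q j).a + (q j).b + (2 * n - 1) ≤ (q (j + 1)).a + (q (j + 1)).b) := by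
  have hle := path_le (α := α) (β := β) (m := m)
  obtain ⟨r, τ, hτ, hτ0, hr, hblocks⟩ := exists_greedy_blocks
    (σ := fun t => (path α β m t).a + (path α β m t).b) (L := 2 * m) hn
    (fun t => (path_succ_bounds t).2.2) (fun t => by have := hle t; omega)
    ⟨2 * m, by have := min_le_level_path hα hβ hαm hβm (2 * m); have := hle (2 * m); omega⟩
  obtain ⟨hL, hceil⟩ := block_count_bounds (r := r)
    (v := fun j => (path α β m (τ j)).a + (path α β m (τ j)).b) hn (by simp [hτ0, path])
    hr hblocks
  have hend := hle (τ r)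
  exact ⟨r, fun j => path α β m (τ j), fun j => path_isCompatible hα hβ _,
    (monotone_nat_of_le_succ fun t => (path_succ_bounds t).1).comp hτ,
    (monotone_nat_of_le_succ fun t => (path_succ_bounds t).2.1).comp hτ,
    by simp [hτ0, path], by simp [hτ0, path], by dsimp only; omega, by dsimp only; omega,
    hL, hceil, fun j hj => (hblocks j hj).2⟩

def extend {K m : ℕ} (al : Fin K → Fin m) (i : ℕ) : ℕ :=
  if h : i < K then al ⟨i, h⟩ else m + i

section Extend

variable {K m : ℕ} {al : Fin K → Fin m}

theorem strictMono_extend (hal : StrictMono al) : StrictMono (extend al) := by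
  intro i j hij
  unfold extend
  split_ifs with hi hj hj
  · exact hal (Fin.mk_lt_mk.2 hij)
  · have := (al ⟨i, hi⟩).isLt; omega
  · omega
  · omega

theorem extend_lt_iff (i : ℕ) : extend al i < m ↔ i < K := by
  unfold extend
  split_ifs with hi
  · exact iff_of_true (al ⟨i, hi⟩).isLt hi
  · omega

end Extend

theorem prefixScore_extend {m K : ℕ} (al mu : Fin K → Fin m) (s t : ℕ) {q : Cut}
    (ha : q.a = m) (hb : q.b = m) (hc : q.c = K) :
    prefixScore S δ x y s t (extend al) (extend mu) q =
      (∑ i, S (x (s + al i)) (y (t + mu i))) + δ * ((((m : ℝ) - K) + ((m : ℝ) - K)) / 2) := by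
  unfold prefixScore
  rw [ha, hb, hc, ← Fin.sum_univ_eq_sum_range]
  simp [extend]

theorem mem_partSet {r k n : ℕ} {A B : ℕ → ℕ} (hA : Monotone A) (hB : Monotone B)
    (hA0 : A 0 = 0) (hB0 : B 0 = 0) (hAr : A r = k * n) (hBr : B r = k * n)
    (hsize : ∀ j < r, A (j + 1) + B (j + 1) ≤ A j + B j + 2 * n ∧
      (j + 1 < r → A j + B j + (2 * n - 1) ≤ A (j + 1) + B (j + 1))) :
    (fun j : Fin (r + 1) => A j + 1, fun j : Fin (r + 1) => B j + 1) ∈ PartSet r k n := by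
  refine ⟨fun i j hij => Nat.add_le_add_right (hA hij) 1,
    fun i j hij => Nat.add_le_add_right (hB hij) 1, by simp [hA0], by simp [hB0],
    by simp [hAr], by simp [hBr], fun j => ?_⟩
  have hAj := hA (Nat.le_add_right (j : ℕ) 1)
  have hBj := hB (Nat.le_add_right (j : ℕ) 1)
  obtain ⟨hle, hge⟩ := hsize j j.isLt
  simp only [Fin.val_succ, Fin.val_castSucc, Set.mem_insert_iff, Set.mem_singleton_iff]
  exact ⟨fun h => by have := hge h; omega, fun _ => by omega⟩

theorem exists_partition_ge {k n : ℕ} (hn : 1 ≤ n) {K : ℕ} {al mu : Fin K → Fin (k * n)}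
    (hal : StrictMono al) (hmu : StrictMono mu) :
    ∃ r, k ≤ r ∧ r ≤ ⌈(2 * (k : ℚ) * n) / (2 * (n : ℚ) - 1)⌉₊ ∧ ∃ p ∈ PartSet r k n,
      (∑ i, S (x (1 + al i)) (y (1 + mu i))) +
          δ * (((((k * n : ℕ) : ℝ) - K) + (((k * n : ℕ) : ℝ) - K)) / 2) ≤
        ∑ j : Fin r, blockScore S δ x y (p.1 j.castSucc) (p.2 j.castSucc)
          (p.1 j.succ - p.1 j.castSucc) (p.2 j.succ - p.2 j.castSucc) := by
  have hα := strictMono_extend hal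
  have hβ := strictMono_extend hmu
  obtain ⟨r, q, hq, hqa, hqb, ha0, hb0, har, hbr, hL, hceil, hsize⟩ :=
    exists_compatible_cuts hα hβ extend_lt_iff extend_lt_iff hn
  refine ⟨r, Nat.le_of_mul_le_mul_left (by linarith) (by omega : 0 < 2 * n), ?_, _,
    mem_partSet hqa hqb ha0 hb0 har hbr hsize, ?_⟩
  · convert hceil using 3
    push_cast
    ring
  have hc0 : (q 0).c = 0 :=
    Nat.eq_zero_of_not_pos fun h => by simpa [ha0] using ((hq 0).1 0).2 h
  have hcr : (q r).c = K := (hq r).c_eq_of_a_eq extend_lt_iff har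
  have h0 : prefixScore S δ x y 1 1 (extend al) (extend mu) (q 0) = 0 := by
    simp [prefixScore, ha0, hb0, hc0]
  calc _ = prefixScore S δ x y 1 1 (extend al) (extend mu) (q r) -
        prefixScore S δ x y 1 1 (extend al) (extend mu) (q 0) := by
        rw [h0, sub_zero, prefixScore_extend S δ x y al mu 1 1 har hbr hcr]
    _ ≤ _ := prefixScore_sub_le_sum_blockScore S δ x y hα hβ 1 1 q hq hqa hqb r
    _ = _ := by
        rw [← Fin.sum_univ_eq_sum_range]
        simp only [Fin.val_succ, Fin.val_castSucc, Nat.add_sub_add_right]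

end Alignment

open Alignment

theorem alignScore_eq_max_over_partitions_general
    {𝔸 : Type*}
    (S : 𝔸 → 𝔸 → ℝ)
    (δ : ℝ)
    (k n : ℕ) (hn : 1 ≤ n) (x y : ℕ → 𝔸) :
    alignScore S δ (fun i : Fin (k * n) => x ((i : ℕ) + 1))
        (fun i : Fin (k * n) => y ((i : ℕ) + 1)) =
      sSup {s : ℝ | ∃ r : ℕ, k ≤ r ∧
        r ≤ Nat.ceil ((2 * (k : ℚ) * n) / (2 * (n : ℚ) - 1)) ∧
        ∃ p ∈ PartSet r k n,
          s = ∑ j : Fin r, alignScore2 S δ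
            (fun i : Fin (p.1 j.succ - p.1 j.castSucc) => x (p.1 j.castSucc + (i : ℕ)))
            (fun i : Fin (p.2 j.succ - p.2 j.castSucc) => y (p.2 j.castSucc + (i : ℕ)))} := by
  have hlhs : alignScore S δ (fun i : Fin (k * n) => x ((i : ℕ) + 1))
      (fun i : Fin (k * n) => y ((i : ℕ) + 1)) = blockScore S δ x y 1 1 (k * n) (k * n) := by
    simp only [alignScore_eq_alignScore2, blockScore, add_comm]
  rw [hlhs, blockScore, alignScore2_eq_sSup_scores]
  apply csSup_eq_csSup_of_forall_exists_le
  · rintro _ ⟨K, al, mu, hal, hmu, rfl⟩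
    obtain ⟨r, hkr, hr, p, hp, hle⟩ := exists_partition_ge S δ x y hn hal hmu
    exact ⟨_, ⟨r, hkr, hr, p, hp, rfl⟩, hle⟩
  · rintro _ ⟨r, -, -, p, hp, rfl⟩
    exact ⟨_, alignScore2_mem_scores .., sum_blockScore_le_of_mem_partSet S δ x y hp⟩

/-- The optimal alignment score of sequences of length `k·n` equals the maximum over
partitions in `ℬ_{k,n}` of the sum of blockwise optimal scores. -/
theorem alignScore_eq_max_over_partitions
    {𝔸 : Type*} [Fintype 𝔸] [Nonempty 𝔸]
    (S : 𝔸 → 𝔸 → ℝ) (hsymm : ∀ a b, S a b = S b a) (hpos : ∀ a b, 0 ≤ S a b)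
    (δ : ℝ) (hδ : δ ≤ ⨆ a, ⨆ b, S a b)
    (k n : ℕ) (hk : 1 ≤ k) (hn : 1 ≤ n) (x y : ℕ → 𝔸) :
    alignScore S δ (fun i : Fin (k * n) => x ((i : ℕ) + 1))
        (fun i : Fin (k * n) => y ((i : ℕ) + 1)) =
      sSup {s : ℝ | ∃ r : ℕ, k ≤ r ∧
        r ≤ Nat.ceil ((2 * (k : ℚ) * n) / (2 * (n : ℚ) - 1)) ∧
        ∃ p ∈ PartSet r k n,
          s = ∑ j : Fin r, alignScore2 S δ
            (fun i : Fin (p.1 j.succ - p.1 j.castSucc) => x (p.1 j.castSucc + (i : ℕ)))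
            (fun i : Fin (p.2 j.succ - p.2 j.castSucc) => y (p.2 j.castSucc + (i : ℕ)))} :=
  alignScore_eq_max_over_partitions_general S δ k n hn x y
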